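/- arXiv:1209.0935 — 7 statements merged into one kernel-verified Lean document; each statement's English description precedes it below -/
import Mathlib

section
/- Every universal epistemic formula (built from atoms, negated atoms, ∧, ∨, and K_i) is successful: if M, w ⊨ φ then M|_φ, w ⊨ φ. -/
/-- Formulas of public announcement logic over agent type `A` and atoms `P`. -/
inductive Form (A P : Type) : Type where
  | atom : P → Form A P
  | neg  : Form A P → Form A P
  | and  : Form A P → Form A P → Form A P
  | or   : Form A P → Form A P → Form A P
  | K    : A → Form A P → Form A P
  | ann  : Form A P → Form A P → Form A P

/-- The possibility operator `L_a φ := ¬ K_a ¬ φ`. -/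
def Form.L {A P : Type} (a : A) (φ : Form A P) : Form A P := .neg (.K a (.neg φ))

/-- An S5 epistemic model: worlds, an equivalence relation per agent, a valuation. -/
structure Model (A P : Type) where
  W : Type
  R : A → W → W → Prop
  equiv : ∀ a, Equivalence (R a)
  V : P → W → Prop

/-- Restriction (submodel) of a model to the worlds satisfying `S`. -/
def Model.restrict {A P : Type} (M : Model A P) (S : M.W → Prop) : Model A P where
  W := {w : M.W // S w}
  R a u v := M.R a u.1 v.1
  equiv a := ⟨fun _ => (M.equiv a).refl _, fun h => (M.equiv a).symm h,
              fun h h' => (M.equiv a).trans h h'⟩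
  V p w := M.V p w.1

/-- Truth of a formula at a world of a model. -/
def sat {A P : Type} : (M : Model A P) → M.W → Form A P → Prop
  | M, w, .atom p => M.V p w
  | M, w, .neg φ => ¬ sat M w φ
  | M, w, .and φ ψ => sat M w φ ∧ sat M w ψ
  | M, w, .or φ ψ => sat M w φ ∨ sat M w ψ
  | M, w, .K a φ => ∀ v, M.R a w v → sat M v φ
  | M, w, .ann φ ψ => ∀ h : sat M w φ, sat (M.restrict (fun v => sat M v φ)) ⟨w, h⟩ ψ

/-- A formula is successful iff it remains true after being announced. -/
def successful {A P : Type} (φ : Form A P) : Prop :=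
  ∀ (M : Model A P) (w : M.W) (h : sat M w φ),
    sat (M.restrict (fun v => sat M v φ)) ⟨w, h⟩ φ

/-- Purely propositional formulas (no epistemic or announcement operators). -/
def Form.isProp {A P : Type} : Form A P → Prop
  | .atom _ => True
  | .neg φ => φ.isProp
  | .and φ ψ => φ.isProp ∧ ψ.isProp
  | .or φ ψ => φ.isProp ∧ ψ.isProp
  | .K _ _ => False
  | .ann _ _ => False

/-- Prefix a formula with a sequence of `K` operators. -/
def Kseq {A P : Type} (l : List A) (φ : Form A P) : Form A P := l.foldr .K φ

/-- Prefix a formula with a sequence of `L` operators. -/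
def Lseq {A P : Type} (l : List A) (φ : Form A P) : Form A P := l.foldr Form.L φ

/-- Prefix a formula with a sequence of epistemic operators:
`(a, true)` stands for `K_a` and `(a, false)` for `L_a`. -/
def Eseq {A P : Type} (l : List (A × Bool)) (φ : Form A P) : Form A P :=
  l.foldr (fun e ψ => if e.2 then .K e.1 ψ else Form.L e.1 ψ) φ

/-- Universal formulas: atoms, negated atoms, conjunction, disjunction, knowledge. -/
inductive Universal {A P : Type} : Form A P → Prop
  | atom (p : P) : Universal (.atom p)
  | negAtom (p : P) : Universal (.neg (.atom p))
  | and {φ ψ} : Universal φ → Universal ψ → Universal (φ.and ψ)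
  | or {φ ψ} : Universal φ → Universal ψ → Universal (φ.or ψ)
  | K (a : A) {φ} : Universal φ → Universal (.K a φ)

lemma universal_submodel {A P : Type} {φ : Form A P} (hφ : Universal φ)
    (M : Model A P) (S : M.W → Prop) :
    ∀ (w : M.W) (hw : S w), sat M w φ → sat (M.restrict S) ⟨w, hw⟩ φ := by
  induction hφ with
  | atom p => intro w hw h; exact h
  | negAtom p => intro w hw h; exact h
  | and h1 h2 ih1 ih2 => intro w hw h; exact ⟨ih1 w hw h.1, ih2 w hw h.2⟩
  | or h1 h2 ih1 ih2 =>
      intro w hw h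
      cases h with
      | inl h => exact Or.inl (ih1 w hw h)
      | inr h => exact Or.inr (ih2 w hw h)
  | K a h ih =>
      intro w hw h' v hv
      exact ih v.1 v.2 (h' v.1 hv)

/-- Every universal epistemic formula is successful. -/
theorem universal_successful {A P : Type} (φ : Form A P) (hφ : Universal φ) :
    successful φ := by
  intro M w h
  exact universal_submodel hφ M _ w h h
end

section
/- Any K-simple single term formula K_1 K_2 … K_n α, where α is a propositional formula and the K_i are knowledge operators for distinct agents, is successful in S5. -/
lemma prop_invariant {A P : Type} (α : Form A P) (hα : α.isProp) (M : Model A P)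
    (S : M.W → Prop) (w : (M.restrict S).W) : sat (M.restrict S) w α ↔ sat M w.1 α := by
  induction α with
  | atom p => exact Iff.rfl
  | neg φ ih => exact not_congr (ih hα)
  | and φ ψ ihφ ihψ => exact and_congr (ihφ hα.1) (ihψ hα.2)
  | or φ ψ ihφ ihψ => exact or_congr (ihφ hα.1) (ihψ hα.2)
  | K a φ ih => exact absurd hα id
  | ann φ ψ _ _ => exact absurd hα id

lemma Kseq_restrict {A P : Type} (α : Form A P) (hα : α.isProp) (M : Model A P)
    (S : M.W → Prop) : ∀ (m : List A) (v : M.W) (hv : S v),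
    sat M v (Kseq m α) → sat (M.restrict S) ⟨v, hv⟩ (Kseq m α) := by
  intro m
  induction m with
  | nil => intro v hv h; exact (prop_invariant α hα M S ⟨v, hv⟩).mpr h
  | cons a m ih =>
      intro v hv h u hru
      exact ih u.1 u.2 (h u.1 hru)

/-- K-simple single term formulas `K_1 … K_n α` (distinct agents, `α` propositional)
are successful. -/
theorem K_simple_single_term_successful {A P : Type} (l : List A) (hl : l.Nodup)
    (α : Form A P) (hα : α.isProp) : successful (Kseq l α) := by
  intro M w h
  exact Kseq_restrict α hα M _ l w h h
end

section
/- The formula K_1 L_2 p (agent 1 knows that agent 2 considers p possible) is unsuccessful in S5 with at least two agents: there is an S5 model M and a world w such that M, w ⊨ K_1 L_2 p but M|_{K_1 L_2 p}, w ⊭ K_1 L_2 p. -/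
/-! In the chain `0 ~a 1 ~b 2 ~a 3` with `p` true at `0` and `2`, the formula `K_a L_b p` holds
exactly at `0` and `1`: from `2` and `3`, agent `a` reaches the `b`-isolated `¬p`-world `3`.
Announcing it deletes `2`, the only world where `b` at `1` could see `p`; so afterwards `L_b p`
fails at `1`, and with it `K_a L_b p` at `0`. -/

section Unsuccessful

variable {A P : Type}

theorem sat_L (M : Model A P) (w : M.W) (a : A) (φ : Form A P) :
    sat M w (Form.L a φ) ↔ ∃ v, M.R a w v ∧ sat M v φ := by
  simp only [Form.L, sat, not_forall, not_not, exists_prop]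

theorem sat_K_L_atom (M : Model A P) (w : M.W) (a b : A) (p : P) :
    sat M w (.K a (.L b (.atom p))) ↔ ∀ v, M.R a w v → ∃ u, M.R b v u ∧ M.V p u := by
  simp only [sat, sat_L]

theorem sat_restrict_K_L_atom (M : Model A P) (S : M.W → Prop) (w : (M.restrict S).W)
    (a b : A) (p : P) :
    sat (M.restrict S) w (.K a (.L b (.atom p))) ↔
      ∀ v, S v → M.R a w.1 v → ∃ u, S u ∧ M.R b v u ∧ M.V p u := by
  rw [sat_K_L_atom]
  simp only [Model.restrict, Subtype.forall, Subtype.exists, exists_prop]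

abbrev Model.ofCells {X C : Type} (cell : A → X → C) (V : P → X → Prop) : Model A P where
  W := X
  R a u v := cell a u = cell a v
  equiv a := (Setoid.ker (cell a)).iseqv
  V := V

open Classical in
/-- Cells: `{0, 1}, {2, 3}` for `a`, `{0}, {1, 2}, {3}` for `b`. Reducible, so that `decide`
sees the worlds as `Fin 4`. -/
noncomputable abbrev chainModel (a b : A) : Model A P :=
  Model.ofCells
    (fun c (w : Fin 4) => if c = a then w.val / 2 else if c = b then (w.val + 1) / 2 else w.val)
    (fun _ w => w = 0 ∨ w = 2)

theorem chainModel_sat_K_L_atom_iff {a b : A} (hab : a ≠ b) (p : P) (w : Fin 4) :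
    sat (chainModel a b) w (.K a (.L b (.atom p))) ↔ w.val < 2 := by
  simp only [sat_K_L_atom, hab, hab.symm, if_true, if_false]
  revert w; decide

theorem not_successful_K_L_atom {a b : A} (hab : a ≠ b) (p : P) :
    ¬ successful (.K a (.L b (.atom p))) := by
  intro h
  have hsat0 := (chainModel_sat_K_L_atom_iff hab p 0).2 (by decide)
  have hannounced := (sat_restrict_K_L_atom _ _ _ _ _ _).1 (h (chainModel a b) _ hsat0)
  simp only [chainModel_sat_K_L_atom_iff hab p, hab, hab.symm, if_true, if_false] at hannounced
  revert hannounced; decide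

end Unsuccessful

/-- The formula `K_1 L_2 p` is unsuccessful in S5 with two agents. -/
theorem K1L2p_unsuccessful :
    ∃ (M : Model (Fin 2) Unit) (w : M.W)
      (h : sat M w (Form.K 0 (Form.L 1 (.atom ())))),
      ¬ sat (M.restrict (fun v => sat M v (Form.K 0 (Form.L 1 (.atom ())))))
          ⟨w, h⟩ (Form.K 0 (Form.L 1 (.atom ()))) := by
  simpa only [successful, not_forall] using
    not_successful_K_L_atom (show (0 : Fin 2) ≠ 1 by decide) ()
end

section
/- The formula L_1 K_2 α (for α a propositional formula) is successful in S5: if M, w ⊨ L_1 K_2 α then in the model restricted to the worlds where L_1 K_2 α holds, L_1 K_2 α still holds at w. -/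
theorem sat_restrict_prop {A P : Type} (M : Model A P) (S : M.W → Prop)
    (φ : Form A P) (hφ : φ.isProp) (w : (M.restrict S).W) :
    sat (M.restrict S) w φ ↔ sat M w.1 φ := by
  induction φ with
  | atom p => rfl
  | neg ψ ih => exact not_congr (ih hφ)
  | and ψ χ ih1 ih2 => exact and_congr (ih1 hφ.1) (ih2 hφ.2)
  | or ψ χ ih1 ih2 => exact or_congr (ih1 hφ.1) (ih2 hφ.2)
  | K _ _ _ => exact absurd hφ id
  | ann _ _ _ _ => exact absurd hφ id

/-- The formula `L_1 K_2 α` (α propositional, distinct agents) is successful in S5. -/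
theorem L1K2_successful {A P : Type} (a b : A) (hab : a ≠ b)
    (α : Form A P) (hα : α.isProp) : successful (Form.L a (.K b α)) := by
  intro M w h
  simp only [Form.L, sat] at h
  push_neg at h
  obtain ⟨v, hwv, hv⟩ := h
  have hvL : sat M v (Form.L a (.K b α)) := by
    simp only [Form.L, sat]
    push_neg
    exact ⟨v, (M.equiv a).refl v, hv⟩
  intro H
  exact H ⟨v, hvL⟩ hwv fun u hu => (sat_restrict_prop M _ α hα u).mpr (hv u.1 hu)
end

section
/- The compound single term formula K_1 L_2 K_1 α is successful in S5: whenever M, w ⊨ K_1 L_2 K_1 α, all worlds along the witnessing chain satisfy K_1 L_2 K_1 α and hence M|_{K_1 L_2 K_1 α}, w ⊨ K_1 L_2 K_1 α. -/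
/-- Propositional formulas are invariant under restriction. -/
lemma prop_sat {A P : Type} (M : Model A P) (S : M.W → Prop) :
    ∀ (α : Form A P), α.isProp → ∀ u : (M.restrict S).W,
      (sat (M.restrict S) u α ↔ sat M u.1 α)
  | .atom p, _, u => Iff.rfl
  | .neg φ, hp, u => by
      simp only [sat]; rw [prop_sat M S φ hp u]
  | .and φ ψ, hp, u => by
      simp only [sat]; rw [prop_sat M S φ hp.1 u, prop_sat M S ψ hp.2 u]
  | .or φ ψ, hp, u => by
      simp only [sat]; rw [prop_sat M S φ hp.1 u, prop_sat M S ψ hp.2 u]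

/-- If `K_a α` holds at `u`, then `K_1 L_2 K_1 α` holds at `u`. -/
lemma Ka_to_phi {A P : Type} (a b : A) (α : Form A P) (M : Model A P) (u : M.W)
    (h : sat M u (.K a α)) : sat M u (Form.K a (Form.L b (.K a α))) := by
  intro v hv
  show ¬ sat M v (.K b (.neg (.K a α)))
  intro hcon
  exact hcon v ((M.equiv b).refl v) fun t ht => h t ((M.equiv a).trans hv ht)

/-- The compound single term formula `K_1 L_2 K_1 α` is successful in S5. -/
theorem K1L2K1_successful {A P : Type} (a b : A) (hab : a ≠ b)
    (α : Form A P) (hα : α.isProp) :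
    successful (Form.K a (Form.L b (.K a α))) := by
  intro M w h
  set φ : Form A P := Form.K a (Form.L b (.K a α)) with hφ
  -- work in restricted model
  intro v hv
  -- v : worlds of restriction, hv : R a w v.1
  -- φ holds at v.1 in M since R a is an equivalence
  have hφv : sat M v.1 φ := by
    intro t ht
    exact h t ((M.equiv a).trans hv ht)
  -- extract witness u
  have hL : ¬ sat M v.1 (.K b (.neg (.K a α))) := hφv v.1 ((M.equiv a).refl v.1)
  simp only [sat] at hL
  push_neg at hL
  obtain ⟨u, hbu, hKa⟩ := hL
  have hKau : sat M u (Form.K a α) := hKa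
  have hφu : sat M u φ := Ka_to_phi a b α M u hKau
  intro hcon
  exact hcon ⟨u, hφu⟩ hbu fun t ht => (prop_sat M _ α hα t).mpr (hKau t.1 ht)
end

section
/- If φ and ψ are unsuccessful KL-simple single term formulas whose epistemic operators involve disjoint sets of agents and whose propositional parts use disjoint propositional letters, then φ ∧ ψ is unsuccessful. -/
/-- Agents occurring in a formula. -/
def Form.agents {A P : Type} : Form A P → Set A
  | .atom _ => ∅
  | .neg φ => φ.agents
  | .and φ ψ => φ.agents ∪ ψ.agents
  | .or φ ψ => φ.agents ∪ ψ.agents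
  | .K a φ => insert a φ.agents
  | .ann φ ψ => φ.agents ∪ ψ.agents

/-- Propositional letters occurring in a formula. -/
def Form.atoms {A P : Type} : Form A P → Set P
  | .atom p => {p}
  | .neg φ => φ.atoms
  | .and φ ψ => φ.atoms ∪ ψ.atoms
  | .or φ ψ => φ.atoms ∪ ψ.atoms
  | .K _ φ => φ.atoms
  | .ann φ ψ => φ.atoms ∪ ψ.atoms

/-- KL-simple single term formulas: `K_a X L_b Y α` with pairwise distinct agents
and `α` propositional. -/
def KLSimple {A P : Type} (φ : Form A P) : Prop :=
  ∃ (a : A) (X : List A) (b : A) (Y : List (A × Bool)) (α : Form A P),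
    α.isProp ∧ (a :: (X ++ b :: Y.map Prod.fst)).Nodup ∧
    φ = Form.K a (Kseq X (Form.L b (Eseq Y α)))

/-- Announcement-free formulas. -/
def Form.annFree {A P : Type} : Form A P → Prop
  | .atom _ => True
  | .neg φ => φ.annFree
  | .and φ ψ => φ.annFree ∧ ψ.annFree
  | .or φ ψ => φ.annFree ∧ ψ.annFree
  | .K _ φ => φ.annFree
  | .ann _ _ => False

lemma annFree_of_isProp {A P : Type} {α : Form A P} (h : α.isProp) : α.annFree := by
  induction α with
  | atom p => trivial
  | neg φ ih => exact ih h
  | and φ ψ ih₁ ih₂ => exact ⟨ih₁ h.1, ih₂ h.2⟩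
  | or φ ψ ih₁ ih₂ => exact ⟨ih₁ h.1, ih₂ h.2⟩
  | K a φ ih => exact h.elim
  | ann φ ψ _ _ => exact h.elim

lemma annFree_Kseq {A P : Type} {X : List A} {χ : Form A P} (h : χ.annFree) :
    (Kseq X χ).annFree := by
  induction X with
  | nil => exact h
  | cons a X ih => exact ih

lemma annFree_L {A P : Type} {b : A} {χ : Form A P} (h : χ.annFree) :
    (Form.L b χ).annFree := h

lemma annFree_Eseq {A P : Type} {Y : List (A × Bool)} {χ : Form A P} (h : χ.annFree) :
    (Eseq Y χ).annFree := by
  induction Y with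
  | nil => exact h
  | cons e Y ih =>
    show (if e.2 then Form.K e.1 (Eseq Y χ) else Form.L e.1 (Eseq Y χ)).annFree
    split
    · exact ih
    · exact annFree_L ih

lemma annFree_of_KLSimple {A P : Type} {φ : Form A P} (h : KLSimple φ) : φ.annFree := by
  obtain ⟨a, X, b, Y, α, hα, _, rfl⟩ := h
  exact annFree_Kseq (annFree_L (annFree_Eseq (annFree_of_isProp hα)))

open Classical

/-- Gluing of two models: agents in `S` move in the first coordinate, others in the
second; atoms in `T` are evaluated in the first coordinate, others in the second. -/
noncomputable def glue {A P : Type} (M₁ M₂ : Model A P) (S : Set A) (T : Set P) :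
    Model A P where
  W := M₁.W × M₂.W
  R a x y := if a ∈ S then M₁.R a x.1 y.1 ∧ x.2 = y.2 else M₂.R a x.2 y.2 ∧ x.1 = y.1
  equiv a := by
    constructor
    · intro x; split
      · exact ⟨(M₁.equiv a).refl _, rfl⟩
      · exact ⟨(M₂.equiv a).refl _, rfl⟩
    · intro x y h; split at h <;> rename_i hs <;> simp only [if_pos, if_neg, hs, if_true, if_false]
      · exact ⟨(M₁.equiv a).symm h.1, h.2.symm⟩
      · exact ⟨(M₂.equiv a).symm h.1, h.2.symm⟩
    · intro x y z h h'; split at h <;> rename_i hs <;>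
        simp only [hs, if_true, if_false] at h' ⊢
      · exact ⟨(M₁.equiv a).trans h.1 h'.1, h.2.trans h'.2⟩
      · exact ⟨(M₂.equiv a).trans h.1 h'.1, h.2.trans h'.2⟩
  V p x := if p ∈ T then M₁.V p x.1 else M₂.V p x.2

lemma sat_glue_left {A P : Type} (M₁ M₂ : Model A P) (S : Set A) (T : Set P)
    (χ : Form A P) (hann : χ.annFree) (hag : χ.agents ⊆ S) (hat : χ.atoms ⊆ T) :
    ∀ (u : M₁.W) (v : M₂.W), sat (glue M₁ M₂ S T) (u, v) χ ↔ sat M₁ u χ := by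
  revert hann hag hat
  induction χ with
  | atom p =>
    intro _ _ hat u v
    show (if p ∈ T then M₁.V p u else M₂.V p v) ↔ M₁.V p u
    rw [if_pos (hat rfl)]
  | neg χ ih =>
    intro hann hag hat u v
    exact not_congr (ih hann hag hat u v)
  | and χ₁ χ₂ ih₁ ih₂ =>
    intro hann hag hat u v
    exact and_congr (ih₁ hann.1 (fun _ h => hag (Or.inl h)) (fun _ h => hat (Or.inl h)) u v)
      (ih₂ hann.2 (fun _ h => hag (Or.inr h)) (fun _ h => hat (Or.inr h)) u v)
  | or χ₁ χ₂ ih₁ ih₂ =>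
    intro hann hag hat u v
    exact or_congr (ih₁ hann.1 (fun _ h => hag (Or.inl h)) (fun _ h => hat (Or.inl h)) u v)
      (ih₂ hann.2 (fun _ h => hag (Or.inr h)) (fun _ h => hat (Or.inr h)) u v)
  | K a χ ih =>
    intro hann hag hat u v
    have haS : a ∈ S := hag (Set.mem_insert _ _)
    have ih' := ih hann (fun _ h => hag (Set.mem_insert_of_mem _ h)) hat
    constructor
    · intro h u' hr
      exact (ih' u' v).mp (h (u', v) (by
        show (if a ∈ S then _ ∧ _ else _ ∧ _)
        rw [if_pos haS]; exact ⟨hr, rfl⟩))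
    · rintro h ⟨y1, y2⟩ hy
      have hy' : M₁.R a u y1 ∧ v = y2 := by
        have : (if a ∈ S then M₁.R a u y1 ∧ v = y2 else M₂.R a v y2 ∧ u = y1) := hy
        rwa [if_pos haS] at this
      obtain ⟨hr, rfl⟩ := hy'
      exact (ih' y1 v).mpr (h y1 hr)
  | ann χ₁ χ₂ _ _ =>
    intro hann _ _ u v
    exact hann.elim

lemma sat_glue_right {A P : Type} (M₁ M₂ : Model A P) (S : Set A) (T : Set P)
    (χ : Form A P) (hann : χ.annFree) (hag : ∀ a ∈ χ.agents, a ∉ S)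
    (hat : ∀ p ∈ χ.atoms, p ∉ T) :
    ∀ (u : M₁.W) (v : M₂.W), sat (glue M₁ M₂ S T) (u, v) χ ↔ sat M₂ v χ := by
  revert hann hag hat
  induction χ with
  | atom p =>
    intro _ _ hat u v
    show (if p ∈ T then M₁.V p u else M₂.V p v) ↔ M₂.V p v
    rw [if_neg (hat p rfl)]
  | neg χ ih =>
    intro hann hag hat u v
    exact not_congr (ih hann hag hat u v)
  | and χ₁ χ₂ ih₁ ih₂ =>
    intro hann hag hat u v
    exact and_congr (ih₁ hann.1 (fun a h => hag a (Or.inl h)) (fun p h => hat p (Or.inl h)) u v)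
      (ih₂ hann.2 (fun a h => hag a (Or.inr h)) (fun p h => hat p (Or.inr h)) u v)
  | or χ₁ χ₂ ih₁ ih₂ =>
    intro hann hag hat u v
    exact or_congr (ih₁ hann.1 (fun a h => hag a (Or.inl h)) (fun p h => hat p (Or.inl h)) u v)
      (ih₂ hann.2 (fun a h => hag a (Or.inr h)) (fun p h => hat p (Or.inr h)) u v)
  | K a χ ih =>
    intro hann hag hat u v
    have haS : a ∉ S := hag a (Set.mem_insert _ _)
    have ih' := ih hann (fun a' h => hag a' (Set.mem_insert_of_mem _ h)) hat
    constructor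
    · intro h v' hr
      exact (ih' u v').mp (h (u, v') (by
        show (if a ∈ S then _ ∧ _ else _ ∧ _)
        rw [if_neg haS]; exact ⟨hr, rfl⟩))
    · rintro h ⟨y1, y2⟩ hy
      have hy' : M₂.R a v y2 ∧ u = y1 := by
        have : (if a ∈ S then M₁.R a u y1 ∧ v = y2 else M₂.R a v y2 ∧ u = y1) := hy
        rwa [if_neg haS] at this
      obtain ⟨hr, rfl⟩ := hy'
      exact (ih' u y2).mpr (h y2 hr)
  | ann χ₁ χ₂ _ _ =>
    intro hann _ _ u v
    exact hann.elim

lemma sat_restrict_glue_left {A P : Type} (M₁ M₂ : Model A P) (S : Set A) (T : Set P)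
    (Q : (glue M₁ M₂ S T).W → Prop) (Q₁ : M₁.W → Prop) (v₀ : M₂.W)
    (hQ : ∀ u, Q (u, v₀) ↔ Q₁ u)
    (χ : Form A P) (hann : χ.annFree) (hag : χ.agents ⊆ S) (hat : χ.atoms ⊆ T) :
    ∀ (u : M₁.W) (h : Q (u, v₀)),
      sat ((glue M₁ M₂ S T).restrict Q) ⟨(u, v₀), h⟩ χ ↔
        sat (M₁.restrict Q₁) ⟨u, (hQ u).mp h⟩ χ := by
  revert hann hag hat
  induction χ with
  | atom p =>
    intro _ _ hat u h
    show (if p ∈ T then M₁.V p u else M₂.V p v₀) ↔ M₁.V p u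
    rw [if_pos (hat rfl)]
  | neg χ ih =>
    intro hann hag hat u h
    exact not_congr (ih hann hag hat u h)
  | and χ₁ χ₂ ih₁ ih₂ =>
    intro hann hag hat u h
    exact and_congr (ih₁ hann.1 (fun _ h => hag (Or.inl h)) (fun _ h => hat (Or.inl h)) u h)
      (ih₂ hann.2 (fun _ h => hag (Or.inr h)) (fun _ h => hat (Or.inr h)) u h)
  | or χ₁ χ₂ ih₁ ih₂ =>
    intro hann hag hat u h
    exact or_congr (ih₁ hann.1 (fun _ h => hag (Or.inl h)) (fun _ h => hat (Or.inl h)) u h)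
      (ih₂ hann.2 (fun _ h => hag (Or.inr h)) (fun _ h => hat (Or.inr h)) u h)
  | K a χ ih =>
    intro hann hag hat u h
    have haS : a ∈ S := hag (Set.mem_insert _ _)
    have ih' := ih hann (fun _ h => hag (Set.mem_insert_of_mem _ h)) hat
    constructor
    · rintro hs ⟨u', h1'⟩ hr
      have h' : Q (u', v₀) := (hQ u').mpr h1'
      exact (ih' u' h').mp (hs ⟨(u', v₀), h'⟩ (by
        show (if a ∈ S then _ ∧ _ else _ ∧ _)
        rw [if_pos haS]; exact ⟨hr, rfl⟩))
    · rintro hs ⟨⟨y1, y2⟩, hy⟩ hr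
      have hy' : M₁.R a u y1 ∧ v₀ = y2 := by
        have : (if a ∈ S then M₁.R a u y1 ∧ v₀ = y2 else M₂.R a v₀ y2 ∧ u = y1) := hr
        rwa [if_pos haS] at this
      obtain ⟨hr₁, he⟩ := hy'
      subst he
      exact (ih' y1 hy).mpr (hs ⟨y1, (hQ y1).mp hy⟩ hr₁)
  | ann χ₁ χ₂ _ _ =>
    intro hann _ _ u h
    exact hann.elim

/-- The conjunction of two unsuccessful KL-simple single term formulas with disjoint
agents and disjoint propositional letters is unsuccessful. -/
theorem conj_of_unsuccessful_KL_simple_unsuccessful {A P : Type} (φ ψ : Form A P)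
    (hφ : KLSimple φ) (hψ : KLSimple ψ)
    (hagents : φ.agents ∩ ψ.agents = ∅) (hatoms : φ.atoms ∩ ψ.atoms = ∅)
    (h1 : ¬ successful φ) (h2 : ¬ successful ψ) :
    ¬ successful (φ.and ψ) := by
  have annφ := annFree_of_KLSimple hφ
  have annψ := annFree_of_KLSimple hψ
  simp only [successful, not_forall] at h1
  obtain ⟨M₁, w₁, hw₁, hns₁⟩ := h1
  simp only [successful, not_forall] at h2
  obtain ⟨M₂, w₂, hw₂, _⟩ := h2
  set S := φ.agents with hS
  set T := φ.atoms with hT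
  have hagS : ∀ a ∈ ψ.agents, a ∉ S := by
    intro a ha haS
    have : a ∈ φ.agents ∩ ψ.agents := ⟨haS, ha⟩
    rw [hagents] at this; exact this
  have hatT : ∀ p ∈ ψ.atoms, p ∉ T := by
    intro p hp hpT
    have : p ∈ φ.atoms ∩ ψ.atoms := ⟨hpT, hp⟩
    rw [hatoms] at this; exact this
  set Mg := glue M₁ M₂ S T with hMg
  have lemL := sat_glue_left M₁ M₂ S T φ annφ subset_rfl subset_rfl
  have lemR := sat_glue_right M₁ M₂ S T ψ annψ hagS hatT
  have hsφ : sat Mg (w₁, w₂) φ := (lemL w₁ w₂).mpr hw₁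
  have hsψ : sat Mg (w₁, w₂) ψ := (lemR w₁ w₂).mpr hw₂
  have hand : sat Mg (w₁, w₂) (φ.and ψ) := ⟨hsφ, hsψ⟩
  intro hsucc
  have H := hsucc Mg (w₁, w₂) hand
  have Hφ : sat (Mg.restrict (fun v => sat Mg v (φ.and ψ))) ⟨(w₁, w₂), hand⟩ φ := H.1
  have hQ : ∀ u, sat Mg (u, w₂) (φ.and ψ) ↔ sat M₁ u φ := by
    intro u
    constructor
    · intro h; exact (lemL u w₂).mp h.1
    · intro h; exact ⟨(lemL u w₂).mpr h, (lemR u w₂).mpr hw₂⟩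
  have key := sat_restrict_glue_left M₁ M₂ S T (fun v => sat Mg v (φ.and ψ))
    (fun u => sat M₁ u φ) w₂ hQ φ annφ subset_rfl subset_rfl w₁ hand
  exact hns₁ (key.mp Hφ)
end

section
/- Every formula in the class generated by φ := p | ¬p | φ ∧ ψ | φ ∨ ψ | L_a φ | ¬[φ]¬ψ is preserved under supermodels: if M' is a supermodel of M (M is a submodel of M'), w is a world of M, and M, w ⊨ φ, then M', w ⊨ φ. In particular, for the announcement case: if M, w ⊨ φ and M|_φ, w ⊨ ψ, then M', w ⊨ φ and M'|_φ, w ⊨ ψ, using that M|_φ is a submodel of M'|_φ. -/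
/-- The class generated by `φ := p | ¬p | φ ∧ ψ | φ ∨ ψ | L_a φ | ¬[φ]¬ψ`. -/
inductive Existential {A P : Type} : Form A P → Prop
  | atom (p : P) : Existential (.atom p)
  | negAtom (p : P) : Existential (.neg (.atom p))
  | and {φ ψ} : Existential φ → Existential ψ → Existential (φ.and ψ)
  | or {φ ψ} : Existential φ → Existential ψ → Existential (φ.or ψ)
  | L (a : A) {φ} : Existential φ → Existential (Form.L a φ)
  | diaAnn {φ ψ} : Existential φ → Existential ψ → Existential (.neg (.ann φ (.neg ψ)))

/-- A strong homomorphism between models: preserves relations forward and atoms both ways. -/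
def IsHom {A P : Type} (M M' : Model A P) (f : M.W → M'.W) : Prop :=
  (∀ a u v, M.R a u v → M'.R a (f u) (f v)) ∧ (∀ p w, M.V p w ↔ M'.V p (f w))

theorem existential_hom_preserved {A P : Type} {φ : Form A P} (hφ : Existential φ) :
    ∀ (M M' : Model A P) (f : M.W → M'.W), IsHom M M' f →
      ∀ w, sat M w φ → sat M' (f w) φ := by
  induction hφ with
  | atom p =>
    intro M M' f hf w h
    exact (hf.2 p w).mp h
  | negAtom p =>
    intro M M' f hf w h
    exact fun h' => h ((hf.2 p w).mpr h')
  | and _ _ ih1 ih2 =>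
    intro M M' f hf w h
    exact ⟨ih1 M M' f hf w h.1, ih2 M M' f hf w h.2⟩
  | or _ _ ih1 ih2 =>
    intro M M' f hf w h
    exact h.elim (fun h => Or.inl (ih1 M M' f hf w h))
      (fun h => Or.inr (ih2 M M' f hf w h))
  | L a _ ih =>
    intro M M' f hf w h
    simp only [Form.L, sat] at h ⊢
    push_neg at h ⊢
    obtain ⟨v, hv, hs⟩ := h
    exact ⟨f v, hf.1 a w v hv, ih M M' f hf v hs⟩
  | @diaAnn φ ψ hφ _ ihφ ihψ =>
    intro M M' f hf w h
    simp only [sat] at h ⊢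
    push_neg at h ⊢
    obtain ⟨h1, hs⟩ := h
    have h2 : sat M' (f w) φ := ihφ M M' f hf w h1
    refine ⟨h2, ?_⟩
    have hg : IsHom (M.restrict (fun v => sat M v φ))
        (M'.restrict (fun v => sat M' v φ))
        (fun v => ⟨f v.1, ihφ M M' f hf v.1 v.2⟩) :=
      ⟨fun a u v h => hf.1 a u.1 v.1 h, fun p w => hf.2 p w.1⟩
    exact ihψ _ _ _ hg ⟨w, h1⟩ hs

/-- Formulas of this class are truth-preserved under supermodels; in particular,
for the announcement case, truth of `φ` and of `ψ` after announcing `φ` transfers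
from a submodel to the supermodel. -/
theorem existential_preserved_under_supermodels {A P : Type} :
    (∀ φ : Form A P, Existential φ →
      ∀ (M : Model A P) (S : M.W → Prop) (w : (M.restrict S).W),
        sat (M.restrict S) w φ → sat M w.1 φ)
    ∧
    (∀ φ ψ : Form A P, Existential φ → Existential ψ →
      ∀ (M : Model A P) (S : M.W → Prop) (w : (M.restrict S).W)
        (h1 : sat (M.restrict S) w φ),
        sat ((M.restrict S).restrict (fun v => sat (M.restrict S) v φ)) ⟨w, h1⟩ ψ →
        ∃ h2 : sat M w.1 φ,
          sat (M.restrict (fun v => sat M v φ)) ⟨w.1, h2⟩ ψ) := by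
  have hsub : ∀ (M : Model A P) (S : M.W → Prop),
      IsHom (M.restrict S) M Subtype.val :=
    fun M S => ⟨fun _ _ _ h => h, fun _ _ => Iff.rfl⟩
  constructor
  · intro φ hφ M S w h
    exact existential_hom_preserved hφ _ _ _ (hsub M S) w h
  · intro φ ψ hφ hψ M S w h1 h
    have pres : ∀ v : (M.restrict S).W, sat (M.restrict S) v φ → sat M v.1 φ :=
      fun v hv => existential_hom_preserved hφ _ _ _ (hsub M S) v hv
    have h2 : sat M w.1 φ := pres w h1
    refine ⟨h2, ?_⟩
    have hg : IsHom ((M.restrict S).restrict (fun v => sat (M.restrict S) v φ))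
        (M.restrict (fun v => sat M v φ))
        (fun v => ⟨v.1.1, pres v.1 v.2⟩) :=
      ⟨fun a u v h => h, fun p w => Iff.rfl⟩
    exact existential_hom_preserved hψ _ _ _ hg ⟨w, h1⟩ h
end
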